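/- For every real v, the configuration Δ = Δc = v·τ₁, Δbar = Δbarc = 0, κ = κ′ = 0 satisfies V₀ = 4·M₁²·v² (all D-terms vanish along this direction), and the configuration Δbar = Δbarc = v·τ₁, Δ = Δc = 0, κ = κ′ = 0 satisfies V₀ = 4·M₂²·v². Consequently, if V₀ is bounded from below over all configurations, then M₁² ≥ 0 and M₂² ≥ 0. -/

import Mathlib

open Matrix

/-- The Pauli matrices `τ₁, τ₂, τ₃`. -/
noncomputable def pauli : Fin 3 → Matrix (Fin 2) (Fin 2) ℂ :=
  ![!![0, 1; 1, 0], !![0, -Complex.I; Complex.I, 0], !![1, 0; 0, -1]]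

/-- The diagonal bidoublet VEV `Φ = diag(κ, κ')`. -/
noncomputable def PhiM (κ κ' : ℂ) : Matrix (Fin 2) (Fin 2) ℂ := !![κ, 0; 0, κ']

/-- The tree-level Higgs potential of the minimal SUSY left-right model with vanishing
slepton fields, in terms of the triplet fields `Δ, Δbar, Δc, Δbarc` and the diagonal
bidoublet entries `κ, κ'`.  The parameters `M1sq, M2sq, Mpsq (= M′²), Mphisq, musq`
are arbitrary reals and `g, g'` are the gauge couplings. -/
noncomputable def V0 (M1sq M2sq Mpsq Mphisq musq g g' : ℝ)
    (Δ Δbar Δc Δbarc : Matrix (Fin 2) (Fin 2) ℂ) (κ κ' : ℂ) : ℝ :=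
  M1sq * ((Δᴴ * Δ).trace + (Δcᴴ * Δc).trace).re
  + M2sq * ((Δbarᴴ * Δbar).trace + (Δbarcᴴ * Δbarc).trace).re
  + 2 * Mpsq * ((Δ * Δbar).trace + (Δc * Δbarc).trace).re
  + Mphisq * (‖κ‖ ^ 2 + ‖κ'‖ ^ 2)
  + 2 * musq * (κ * κ').re
  + g ^ 2 / 8 * ∑ m : Fin 3,
      ‖((2 : ℂ) • (Δᴴ * pauli m * Δ) + (2 : ℂ) • (Δbarᴴ * pauli m * Δbar)
        + (PhiM κ κ')ᴴ * pauli m * PhiM κ κ').trace‖ ^ 2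
  + g ^ 2 / 8 * ∑ m : Fin 3,
      ‖((2 : ℂ) • (Δcᴴ * pauli m * Δc) + (2 : ℂ) • (Δbarcᴴ * pauli m * Δbarc)
        + PhiM κ κ' * (pauli m)ᵀ * (PhiM κ κ')ᴴ).trace‖ ^ 2
  + g' ^ 2 / 8 * ‖(2 : ℂ) * ((Δᴴ * Δ).trace - (Δcᴴ * Δc).trace
      - (Δbarᴴ * Δbar).trace + (Δbarcᴴ * Δbarc).trace)‖ ^ 2

/-! Along these directions every D-term vanishes: each one is a sum of traces
`tr((v τ₁)† τₘ (v τ₁)) = v² tr(τₘ) = 0` (as `τ₁` is unitary and the Pauli matrices are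
traceless), and the `U(1)` D-term cancels between `Δ` and `Δc` (resp. `Δbar` and `Δbarc`).
Only the mass term `4 M² v²` survives, which is bounded below in `v` only if `M² ≥ 0`. -/

lemma trace_pauli (m : Fin 3) : (pauli m).trace = 0 := by
  fin_cases m <;> simp [pauli, trace_fin_two]

lemma pauli_mul_conjTranspose_self (m : Fin 3) : pauli m * (pauli m)ᴴ = 1 := by
  fin_cases m <;> ext i j <;> fin_cases i <;> fin_cases j <;>
    simp [pauli, mul_apply, Fin.sum_univ_two]

lemma PhiM_zero : PhiM 0 0 = 0 := by
  ext i j; fin_cases i <;> fin_cases j <;> rfl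

section SmulUnitary

variable {n : Type*} [Fintype n] [DecidableEq n] {U : Matrix n n ℂ}

lemma trace_smul_conjTranspose_mul_mul (hU : U * Uᴴ = 1) (v : ℝ) (A : Matrix n n ℂ) :
    (((v : ℂ) • U)ᴴ * A * ((v : ℂ) • U)).trace = (v : ℂ) ^ 2 * A.trace := by
  rw [conjTranspose_smul, Complex.star_def, Complex.conj_ofReal, smul_mul, smul_mul,
    Matrix.mul_smul, trace_smul, trace_smul, trace_mul_comm, ← Matrix.mul_assoc, hU,
    Matrix.one_mul, smul_eq_mul, smul_eq_mul]
  ring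

lemma trace_smul_conjTranspose_mul_self (hU : U * Uᴴ = 1) (v : ℝ) :
    (((v : ℂ) • U)ᴴ * ((v : ℂ) • U)).trace = (v : ℂ) ^ 2 * Fintype.card n := by
  simpa using trace_smul_conjTranspose_mul_mul hU v 1

end SmulUnitary

lemma nonneg_of_forall_le_mul_sq {a C : ℝ} (h : ∀ v : ℝ, C ≤ a * v ^ 2) : 0 ≤ a := by
  by_contra! ha
  have hbot : Filter.Tendsto (fun v : ℝ => a * v ^ 2) Filter.atTop Filter.atBot :=
    (Filter.tendsto_pow_atTop two_ne_zero).const_mul_atTop_of_neg ha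
  obtain ⟨v, hv⟩ := (hbot.eventually_lt_atBot C).exists
  exact hv.not_ge (h v)

section FlatDirections

variable (M1sq M2sq Mpsq Mphisq musq g g' v : ℝ)

lemma V0_Δ_flat :
    V0 M1sq M2sq Mpsq Mphisq musq g g'
      ((v : ℂ) • pauli 0) 0 ((v : ℂ) • pauli 0) 0 0 0 = 4 * M1sq * v ^ 2 := by
  have hτ := pauli_mul_conjTranspose_self 0
  simp only [V0, PhiM_zero, trace_add, trace_smul, trace_smul_conjTranspose_mul_mul hτ,
    trace_smul_conjTranspose_mul_self hτ, trace_pauli, conjTranspose_zero, Matrix.zero_mul,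
    Matrix.mul_zero, trace_zero]
  norm_num [← Complex.ofReal_pow]
  ring

lemma V0_Δbar_flat :
    V0 M1sq M2sq Mpsq Mphisq musq g g'
      0 ((v : ℂ) • pauli 0) 0 ((v : ℂ) • pauli 0) 0 0 = 4 * M2sq * v ^ 2 := by
  have hτ := pauli_mul_conjTranspose_self 0
  simp only [V0, PhiM_zero, trace_add, trace_smul, trace_smul_conjTranspose_mul_mul hτ,
    trace_smul_conjTranspose_mul_self hτ, trace_pauli, conjTranspose_zero, Matrix.zero_mul,
    Matrix.mul_zero, trace_zero]
  norm_num [← Complex.ofReal_pow]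
  ring

end FlatDirections

/-- Along the D-flat direction `Δ = Δc = v·τ₁`, `Δbar = Δbarc = 0`, `κ = κ' = 0` the
potential equals `4M₁²v²`, and along `Δbar = Δbarc = v·τ₁`, `Δ = Δc = 0`, `κ = κ' = 0`
it equals `4M₂²v²`; hence if the potential is bounded from below then `M₁² ≥ 0` and
`M₂² ≥ 0`. -/
theorem V0_flat_directions_M1_M2 (M1sq M2sq Mpsq Mphisq musq g g' : ℝ) :
    (∀ v : ℝ, V0 M1sq M2sq Mpsq Mphisq musq g g'
        ((v : ℂ) • pauli 0) 0 ((v : ℂ) • pauli 0) 0 0 0 = 4 * M1sq * v ^ 2) ∧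
    (∀ v : ℝ, V0 M1sq M2sq Mpsq Mphisq musq g g'
        0 ((v : ℂ) • pauli 0) 0 ((v : ℂ) • pauli 0) 0 0 = 4 * M2sq * v ^ 2) ∧
    ((∃ C : ℝ, ∀ (Δ Δbar Δc Δbarc : Matrix (Fin 2) (Fin 2) ℂ) (κ κ' : ℂ),
        C ≤ V0 M1sq M2sq Mpsq Mphisq musq g g' Δ Δbar Δc Δbarc κ κ') →
      0 ≤ M1sq ∧ 0 ≤ M2sq) := by
  refine ⟨V0_Δ_flat M1sq M2sq Mpsq Mphisq musq g g',
    V0_Δbar_flat M1sq M2sq Mpsq Mphisq musq g g', ?_⟩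
  rintro ⟨C, hC⟩
  have hM1 : 0 ≤ 4 * M1sq := nonneg_of_forall_le_mul_sq fun v =>
    V0_Δ_flat M1sq M2sq Mpsq Mphisq musq g g' v ▸ hC _ _ _ _ _ _
  have hM2 : 0 ≤ 4 * M2sq := nonneg_of_forall_le_mul_sq fun v =>
    V0_Δbar_flat M1sq M2sq Mpsq Mphisq musq g g' v ▸ hC _ _ _ _ _ _
  constructor <;> linarith
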